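/- Let q >= 3, d > q, n >= d+2. Consider the graph G with a (q-3)-clique C, an independent set I of size d-q+1, a complete bipartite graph between C and I, vertices u and v each adjacent to all of C ∪ I, a path w_1,...,w_{n-d-1}, a vertex w, and edges {v, w} and {v, w_1}. Then the number of proper q-colorings of G with sigma(u) != sigma(v) is q! (q-1)^{n-d}, and the number with sigma(u) = sigma(v) is q! (q-1)^{n-d} 2^{d-q}. -/

import Mathlib

/-- Vertices: the (q-3)-clique C (`inl`), the independent set I of size d-q+1
(`inr inl`), the three vertices u, v, w (`inr (inr (inl 0/1/2))`), and the
path w_1, …, w_{n-d-1} (`inr (inr (inr k))`, with w_1 ↦ k = 0). -/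
abbrev V13 (q d n : ℕ) := Fin (q - 3) ⊕ (Fin (d - q + 1) ⊕ (Fin 3 ⊕ Fin (n - d - 1)))

/-- Relation: all pairs within C; complete bipartite C–I; u and v joined to all of C ∪ I;
the edges {v,w} and {v,w_1}; and consecutive path edges. -/
def g13Rel (q d n : ℕ) : V13 q d n → V13 q d n → Prop
  | Sum.inl _, Sum.inl _ => True
  | Sum.inl _, Sum.inr (Sum.inl _) => True
  | Sum.inl _, Sum.inr (Sum.inr (Sum.inl z)) => z = 0 ∨ z = 1
  | Sum.inr (Sum.inl _), Sum.inr (Sum.inr (Sum.inl z)) => z = 0 ∨ z = 1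
  | Sum.inr (Sum.inr (Sum.inl z)), Sum.inr (Sum.inr (Sum.inl z')) => z = 1 ∧ z' = 2
  | Sum.inr (Sum.inr (Sum.inl z)), Sum.inr (Sum.inr (Sum.inr k)) => z = 1 ∧ (k : ℕ) = 0
  | Sum.inr (Sum.inr (Sum.inr k)), Sum.inr (Sum.inr (Sum.inr l)) => (k : ℕ) + 1 = (l : ℕ)
  | _, _ => False

def g13 (q d n : ℕ) : SimpleGraph (V13 q d n) := SimpleGraph.fromRel (g13Rel q d n)

/-- A proper `q`-coloring. -/
def IsProperColoring {V : Type} (q : ℕ) (G : SimpleGraph V) (σ : V → Fin q) : Prop :=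
  ∀ u v : V, G.Adj u v → σ u ≠ σ v

/-!
Colour `C ∪ {u, v}` first. If `σ u ≠ σ v`, these `q - 1` vertices receive distinct colours, in
`q!` ways, and every vertex of `I` is then forced to take the one remaining colour. If
`σ u = σ v`, they use `q - 2` colours, in `q!/2` ways, and every vertex of `I` has two colours
left. In both cases `w` and the path `w_1 … w_{n-d-1}`, which hang off `v`, contribute a factor
`q - 1` per vertex.
-/

open Function Set
open scoped Nat

theorem Nat.card_subtype_prod_eq_mul {α β : Type*} [Finite α] [Finite β] {P : α → Prop}
    {Q : α → β → Prop} {k : ℕ} (hk : ∀ a, P a → Nat.card {b // Q a b} = k) :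
    Nat.card {x : α × β // P x.1 ∧ Q x.1 x.2} = Nat.card {a // P a} * k := by
  let e : {x : α × β // P x.1 ∧ Q x.1 x.2} ≃ Σ a : {a // P a}, {b // Q a b} :=
    { toFun x := ⟨⟨x.1.1, x.2.1⟩, ⟨x.1.2, x.2.2⟩⟩
      invFun y := ⟨(y.1.1, y.2.1), y.1.2, y.2.2⟩ }
  have := Fintype.ofFinite {a // P a}
  rw [Nat.card_congr e, Nat.card_sigma, Finset.sum_congr rfl fun a _ => hk a.1 a.2,
    Finset.sum_const, Finset.card_univ, smul_eq_mul, Nat.card_eq_fintype_card]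

theorem Nat.card_subtype_notMem {α : Type*} [Finite α] (s : Set α) :
    Nat.card {x // x ∉ s} = Nat.card α - s.ncard :=
  (Nat.card_coe_set_eq sᶜ).trans (ncard_compl s)

theorem Nat.card_subtype_ne {α : Type*} [Finite α] (c : α) :
    Nat.card {x // x ≠ c} = Nat.card α - 1 := by
  simpa using Nat.card_subtype_notMem {c}

theorem Set.ncard_insert_range {α : Type*} {m : ℕ} {a : Fin m → α} (ha : Injective a) {u : α}
    (hu : u ∉ range a) : (insert u (range a)).ncard = m + 1 := by
  rw [ncard_insert_of_notMem hu, ncard_range_of_injective ha, Nat.card_fin]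

theorem Nat.factorial_eq_six_mul_descFactorial {q : ℕ} (hq : 3 ≤ q) :
    q ! = 6 * q.descFactorial (q - 3) := by
  simpa [Nat.sub_sub_self hq, Nat.factorial] using
    (Nat.factorial_mul_descFactorial (Nat.sub_le q 3)).symm

section PathColoring

variable {α : Type*}

/-- `p` properly colours a path `p 0, p 1, …` attached by an edge to a vertex of colour `c`. -/
def IsPathColoringFrom (c : α) {m : ℕ} (p : Fin m → α) : Prop :=
  (∀ k : Fin m, (k : ℕ) = 0 → p k ≠ c) ∧ ∀ k l : Fin m, (k : ℕ) + 1 = l → p k ≠ p l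

theorem isPathColoringFrom_cons_iff {c x : α} {m : ℕ} {p : Fin m → α} :
    IsPathColoringFrom c (Fin.cons x p : Fin (m + 1) → α) ↔ x ≠ c ∧ IsPathColoringFrom x p := by
  simp [IsPathColoringFrom, Fin.forall_fin_succ, eq_comm]

theorem Nat.card_isPathColoringFrom [Finite α] (c : α) (m : ℕ) :
    Nat.card {p : Fin m → α // IsPathColoringFrom c p} = (Nat.card α - 1) ^ m := by
  induction m generalizing c with
  | zero => simp [IsPathColoringFrom]
  | succ m ih =>
    let e := Equiv.subtypeEquiv (Fin.consEquiv fun _ => α)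
      (p := fun xp : α × (Fin m → α) => xp.1 ≠ c ∧ IsPathColoringFrom xp.1 xp.2)
      fun _ => isPathColoringFrom_cons_iff.symm
    rw [← Nat.card_congr e, Nat.card_subtype_prod_eq_mul (P := (· ≠ c)) fun x _ => ih x,
      Nat.card_subtype_ne, pow_succ, mul_comm]

end PathColoring

theorem isProperColoring_fromRel_iff {V : Type} {q : ℕ} {r : V → V → Prop} {σ : V → Fin q} :
    IsProperColoring q (SimpleGraph.fromRel r) σ ↔ ∀ x y, r x y → x ≠ y → σ x ≠ σ y := by
  refine ⟨fun h x y hr hne => h x y ⟨hne, .inl hr⟩, ?_⟩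
  rintro h x y ⟨hne, hr | hr⟩
  · exact h x y hr hne
  · exact (h y x hr hne.symm).symm

namespace G13

/-- Colours of `C`, `u`, `v`. -/
abbrev CoreColoring (q : ℕ) := (Fin (q - 3) → Fin q) × Fin q × Fin q

/-- Colours of `I`, `w` and the path `w_1, …, w_{n-d-1}`. -/
abbrev RestColoring (q d n : ℕ) := (Fin (d - q + 1) → Fin q) × Fin q × (Fin (n - d - 1) → Fin q)

variable {q d n : ℕ}

def glue : CoreColoring q × RestColoring q d n ≃ (V13 q d n → Fin q) where
  toFun t := Sum.elim t.1.1 (Sum.elim t.2.1 (Sum.elim ![t.1.2.1, t.1.2.2, t.2.2.1] t.2.2.2))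
  invFun σ := ((fun i => σ (.inl i), σ (.inr (.inr (.inl 0))), σ (.inr (.inr (.inl 1)))),
    (fun j => σ (.inr (.inl j)), σ (.inr (.inr (.inl 2))), fun k => σ (.inr (.inr (.inr k)))))
  right_inv σ := by
    funext x
    rcases x with i | j | z | k
    all_goals try rfl
    fin_cases z <;> rfl

theorem glue_apply (t : CoreColoring q × RestColoring q d n) :
    glue t = Sum.elim t.1.1 (Sum.elim t.2.1 (Sum.elim ![t.1.2.1, t.1.2.2, t.2.2.1] t.2.2.2)) :=
  rfl

def IsProperCore (R : Fin q → Fin q → Prop) (c : CoreColoring q) : Prop :=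
  Injective c.1 ∧ c.2.1 ∉ range c.1 ∧ c.2.2 ∉ range c.1 ∧ R c.2.1 c.2.2

def coreColors (c : CoreColoring q) : Set (Fin q) :=
  insert c.2.1 (insert c.2.2 (range c.1))

def IsProperRest (c : CoreColoring q) (r : RestColoring q d n) : Prop :=
  (∀ j, r.1 j ∉ coreColors c) ∧ r.2.1 ≠ c.2.2 ∧ IsPathColoringFrom c.2.2 r.2.2

theorem isProperCore_and_isProperRest_iff (R : Fin q → Fin q → Prop)
    (t : CoreColoring q × RestColoring q d n) :
    IsProperCore R t.1 ∧ IsProperRest t.1 t.2 ↔ IsProperColoring q (g13 q d n) (glue t) ∧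
      R (glue t (.inr (.inr (.inl 0)))) (glue t (.inr (.inr (.inl 1)))) := by
  obtain ⟨⟨a, u, v⟩, b, w, p⟩ := t
  have hne : ∀ k l : Fin (n - d - 1), (k : ℕ) + 1 = l → k ≠ l := by
    rintro k l h rfl
    omega
  simp +contextual [glue_apply, g13, isProperColoring_fromRel_iff, Sum.forall, g13Rel,
    IsProperCore, IsProperRest, coreColors, IsPathColoringFrom, forall_and,
    injective_iff_pairwise_ne, Pairwise, onFun, hne, forall_comm (α := Fin 3),
    forall_comm (α := Fin (d - q + 1))]
  tauto

def coloringsEquiv (R : Fin q → Fin q → Prop) :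
    {σ : V13 q d n → Fin q // IsProperColoring q (g13 q d n) σ ∧
        R (σ (.inr (.inr (.inl 0)))) (σ (.inr (.inr (.inl 1))))} ≃
      {t : CoreColoring q × RestColoring q d n // IsProperCore R t.1 ∧ IsProperRest t.1 t.2} :=
  (Equiv.subtypeEquiv glue (isProperCore_and_isProperRest_iff R)).symm

theorem card_isProperRest (hn : d + 1 ≤ n) (c : CoreColoring q) :
    Nat.card {r : RestColoring q d n // IsProperRest c r} =
      Nat.card {x // x ∉ coreColors c} ^ (d - q + 1) * (q - 1) ^ (n - d) := by
  unfold IsProperRest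
  rw [Nat.card_congr (Equiv.subtypeProdEquivProd
      (p := fun b : Fin (d - q + 1) → Fin q => ∀ j, b j ∉ coreColors c)
      (q := fun wp : Fin q × (Fin (n - d - 1) → Fin q) =>
        wp.1 ≠ c.2.2 ∧ IsPathColoringFrom c.2.2 wp.2)),
    Nat.card_prod, Nat.card_congr (Equiv.subtypePiEquivPi (β := fun _ : Fin (d - q + 1) => Fin q)
      (p := fun _ x => x ∉ coreColors c)), Nat.card_pi,
    Nat.card_congr (Equiv.subtypeProdEquivProd (p := (· ≠ c.2.2))), Nat.card_prod,
    Nat.card_subtype_ne, Nat.card_isPathColoringFrom, Nat.card_fin, ← pow_succ',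
    show n - d - 1 + 1 = n - d by omega]
  simp

theorem card_isProperCore (hq : 3 ≤ q) (R : Fin q → Fin q → Prop) {k : ℕ}
    (hk : ∀ a : Fin (q - 3) → Fin q, Injective a → ∀ u ∉ range a,
      Nat.card {v // v ∉ range a ∧ R u v} = k) :
    Nat.card {c : CoreColoring q // IsProperCore R c} = q.descFactorial (q - 3) * (3 * k) := by
  have h3 : ∀ a : Fin (q - 3) → Fin q, Injective a → Nat.card {u // u ∉ range a} = 3 := by
    intro a ha
    rw [Nat.card_subtype_notMem, ncard_range_of_injective ha, Nat.card_fin, Nat.card_fin]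
    omega
  unfold IsProperCore
  rw [Nat.card_subtype_prod_eq_mul (P := Injective) fun a ha =>
      (Nat.card_subtype_prod_eq_mul (P := (· ∉ range a)) (hk a ha)).trans (by rw [h3 a ha]),
    Nat.card_congr (Equiv.subtypeInjectiveEquivEmbedding _ _), Nat.card_eq_fintype_card,
    Fintype.card_embedding_eq, Fintype.card_fin, Fintype.card_fin]

theorem card_isProperCore_ne (hq : 3 ≤ q) :
    Nat.card {c : CoreColoring q // IsProperCore (· ≠ ·) c} = q ! := by
  rw [card_isProperCore hq _ (k := 2) fun a ha u hu => ?_,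
    Nat.factorial_eq_six_mul_descFactorial hq]
  · ring
  rw [Nat.card_congr (Equiv.subtypeEquivRight (q := (· ∉ insert u (range a))) fun v => by
      rw [mem_insert_iff, not_or, ne_comm, and_comm]),
    Nat.card_subtype_notMem, ncard_insert_range ha hu, Nat.card_fin]
  omega

theorem card_isProperCore_eq (hq : 3 ≤ q) :
    2 * Nat.card {c : CoreColoring q // IsProperCore (· = ·) c} = q ! := by
  rw [card_isProperCore hq _ (k := 1) fun a _ u hu => ?_,
    Nat.factorial_eq_six_mul_descFactorial hq]
  · ring
  rw [Nat.card_congr (Equiv.subtypeEquivRight (q := (· = u)) fun v =>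
      ⟨fun h => h.2.symm, by rintro rfl; exact ⟨hu, rfl⟩⟩), Nat.card_unique]

theorem card_compl_coreColors_of_ne (hq : 3 ≤ q) {c : CoreColoring q}
    (hc : IsProperCore (· ≠ ·) c) : Nat.card {x // x ∉ coreColors c} = 1 := by
  obtain ⟨ha, hu, hv, huv⟩ := hc
  have hu' : c.2.1 ∉ insert c.2.2 (range c.1) := by
    rw [mem_insert_iff, not_or]
    exact ⟨huv, hu⟩
  rw [Nat.card_subtype_notMem, coreColors, ncard_insert_of_notMem hu', ncard_insert_range ha hv,
    Nat.card_fin]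
  omega

theorem card_compl_coreColors_of_eq (hq : 3 ≤ q) {c : CoreColoring q}
    (hc : IsProperCore (· = ·) c) : Nat.card {x // x ∉ coreColors c} = 2 := by
  obtain ⟨ha, hu, -, huv⟩ := hc
  rw [Nat.card_subtype_notMem, coreColors, ← huv, insert_idem, ncard_insert_range ha hu,
    Nat.card_fin]
  omega

theorem ncard_isProperColoring_and_rel (hn : d + 1 ≤ n) (R : Fin q → Fin q → Prop) {k : ℕ}
    (hk : ∀ c, IsProperCore R c → Nat.card {x // x ∉ coreColors c} = k) :
    {σ : V13 q d n → Fin q | IsProperColoring q (g13 q d n) σ ∧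
        R (σ (.inr (.inr (.inl 0)))) (σ (.inr (.inr (.inl 1))))}.ncard =
      Nat.card {c : CoreColoring q // IsProperCore R c} *
        (k ^ (d - q + 1) * (q - 1) ^ (n - d)) := by
  rw [← Nat.card_coe_set_eq, coe_ofPred, Nat.card_congr (coloringsEquiv R),
    Nat.card_subtype_prod_eq_mul fun c hc => (card_isProperRest hn c).trans (by rw [hk c hc])]

end G13

theorem stmt13_general (q d n : ℕ) (hq : 3 ≤ q) (hn : d + 2 ≤ n) :
    {σ : V13 q d n → Fin q | IsProperColoring q (g13 q d n) σ ∧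
        σ (Sum.inr (Sum.inr (Sum.inl 0))) ≠ σ (Sum.inr (Sum.inr (Sum.inl 1)))}.ncard =
      Nat.factorial q * (q - 1) ^ (n - d) ∧
    {σ : V13 q d n → Fin q | IsProperColoring q (g13 q d n) σ ∧
        σ (Sum.inr (Sum.inr (Sum.inl 0))) = σ (Sum.inr (Sum.inr (Sum.inl 1)))}.ncard =
      Nat.factorial q * (q - 1) ^ (n - d) * 2 ^ (d - q) := by
  constructor
  · rw [G13.ncard_isProperColoring_and_rel (by omega) (· ≠ ·)
        fun _ => G13.card_compl_coreColors_of_ne hq,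
      G13.card_isProperCore_ne hq, one_pow, one_mul]
  · rw [G13.ncard_isProperColoring_and_rel (by omega) (· = ·)
        fun _ => G13.card_compl_coreColors_of_eq hq,
      ← G13.card_isProperCore_eq hq, pow_succ]
    ring

/-- For 3 ≤ q < d and n ≥ d+2: the number of proper q-colorings of G with σ(u) ≠ σ(v)
is q!(q-1)^{n-d}, and the number with σ(u) = σ(v) is q!(q-1)^{n-d} 2^{d-q}. -/
theorem stmt13 (q d n : ℕ) (hq : 3 ≤ q) (hd : q < d) (hn : d + 2 ≤ n) :
    {σ : V13 q d n → Fin q | IsProperColoring q (g13 q d n) σ ∧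
        σ (Sum.inr (Sum.inr (Sum.inl 0))) ≠ σ (Sum.inr (Sum.inr (Sum.inl 1)))}.ncard =
      Nat.factorial q * (q - 1) ^ (n - d) ∧
    {σ : V13 q d n → Fin q | IsProperColoring q (g13 q d n) σ ∧
        σ (Sum.inr (Sum.inr (Sum.inl 0))) = σ (Sum.inr (Sum.inr (Sum.inl 1)))}.ncard =
      Nat.factorial q * (q - 1) ^ (n - d) * 2 ^ (d - q) :=
  stmt13_general q d n hq hn
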